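/- arXiv:math/0110257 — 4 statements merged into one kernel-verified Lean document; each statement's English description precedes it below -/
import Mathlib

section
/- Let G be a finite group and let V₁, …, V_ℓ be irreducible finite-dimensional complex representations of G, each of which is self-dual. Let ν_i := |G|⁻¹ ∑_{g∈G} χ_{V_i}(g²) be the Frobenius–Schur indicator of V_i (so ν_i ∈ {+1, −1}). If ∏_{i=1}^ℓ ν_i = −1, then the dimension of the space of G-invariants (V₁ ⊗ V₂ ⊗ ⋯ ⊗ V_ℓ)^G is even. -/
/-!
Each self-dual irreducible `Vᵢ` carries an invariant nondegenerate bilinear form `Bᵢ`. By Schur's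
lemma it is unique up to a scalar, so `Bᵢ(y, x) = cᵢ Bᵢ(x, y)`. The indicator `νᵢ` equals `cᵢ`:
`χ(g²)` is the trace of the swap composed with `g ⊗ g` on `Vᵢ ⊗ Vᵢ`, so `νᵢ` is the trace of the
swap on the line `(Vᵢ ⊗ Vᵢ)^G`, where it acts by `cᵢ`. The tensor product of the `Bᵢ` is then an
invariant nondegenerate form on `V₁ ⊗ ⋯ ⊗ V_ℓ` with `B(w, z) = (∏ νᵢ) B(z, w) = -B(z, w)`.
Averaging over `G` shows that it stays nondegenerate on the invariants, and a nondegenerate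
skew-symmetric form only exists in even dimension.
-/

open scoped TensorProduct

noncomputable section

/-- The Frobenius–Schur indicator of a representation of a finite group `G`:
`ν(V) = |G|⁻¹ ∑_{g ∈ G} χ_V(g²)`. -/
def fsIndicator (G : Type*) [Group G] [Fintype G] {W : Type*} [AddCommGroup W] [Module ℂ W]
    (ρ : Representation ℂ G W) : ℂ :=
  (Fintype.card G : ℂ)⁻¹ * ∑ g : G, LinearMap.trace ℂ W (ρ (g * g))

/-- A representation is irreducible if the space is nonzero and the only subspaces stable
under all `ρ g` are `⊥` and `⊤`. -/
def RepIsIrreducible {G W : Type*} [Group G] [AddCommGroup W] [Module ℂ W]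
    (ρ : Representation ℂ G W) : Prop :=
  Nontrivial W ∧ ∀ p : Submodule ℂ W, (∀ g : G, ∀ x ∈ p, ρ g x ∈ p) → p = ⊥ ∨ p = ⊤

/-- A representation is self-dual if it is isomorphic, as a `G`-representation, to its dual
equipped with the contragredient action. -/
def RepIsSelfDual {G W : Type*} [Group G] [AddCommGroup W] [Module ℂ W]
    (ρ : Representation ℂ G W) : Prop :=
  ∃ e : W ≃ₗ[ℂ] Module.Dual ℂ W, ∀ (g : G) (v : W), e (ρ g v) = ρ.dual g (e v)

/-- The diagonal action of `G` on the tensor product `V₁ ⊗ V₂ ⊗ ⋯ ⊗ V_ℓ`. -/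
def piTensorRep {ℓ : ℕ} {G : Type*} [Group G] {V : Fin ℓ → Type*}
    [∀ i, AddCommGroup (V i)] [∀ i, Module ℂ (V i)]
    (ρ : ∀ i, Representation ℂ G (V i)) : Representation ℂ G (⨂[ℂ] i, V i) :=
  PiTensorProduct.mapMonoidHom.comp (Pi.monoidHom ρ)

open Module

theorem even_finrank_of_separatingLeft_of_flip_eq_neg {k U : Type*} [Field k] [AddCommGroup U]
    [Module k U] [FiniteDimensional k U] (hk : ringChar k ≠ 2) {B : LinearMap.BilinForm k U}
    (hB : B.SeparatingLeft) (hskew : B.flip = -B) : Even (finrank k U) := by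
  let b := finBasis k U
  set M := LinearMap.toMatrix₂ b b B
  have hdet : M.det ≠ 0 := (LinearMap.separatingLeft_iff_det_ne_zero b).1 hB
  have hMt : M.transpose = -M := by
    ext i j
    simpa [M, LinearMap.toMatrix₂_apply] using congr($hskew (b i) (b j))
  have hpow : (-1 : k) ^ finrank k U = 1 := by
    refine mul_right_cancel₀ hdet ?_
    calc (-1 : k) ^ finrank k U * M.det = (-M).det := by rw [Matrix.det_neg, Fintype.card_fin]
      _ = 1 * M.det := by rw [← hMt, Matrix.det_transpose, one_mul]
  exact (neg_one_pow_eq_one_iff_even (Ring.neg_one_ne_one_of_char_ne_two hk)).1 hpow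

theorem LinearMap.trace_comm_comp_map {k V : Type*} [CommRing k] [AddCommGroup V] [Module k V]
    [Module.Free k V] [Module.Finite k V] (A B : V →ₗ[k] V) :
    trace k (V ⊗[k] V) (TensorProduct.comm k V V ∘ₗ TensorProduct.map A B) =
      trace k V (A ∘ₗ B) := by
  classical
  let b := Free.chooseBasis k V
  rw [trace_eq_matrix_trace k (b.tensorProduct b), trace_eq_matrix_trace k b, toMatrix_comp b b b,
    Matrix.trace_mul_comm, Matrix.trace, Matrix.trace, Fintype.sum_prod_type]
  simp [Matrix.mul_apply, toMatrix_apply, Basis.tensorProduct_repr_tmul_apply, mul_comm]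

namespace Representation

section Invariant

variable {k G V : Type*} [CommRing k] [Group G] [AddCommGroup V] [Module k V]
  {ρ : Representation k G V}

def IsInvariantForm (ρ : Representation k G V) (B : LinearMap.BilinForm k V) : Prop :=
  ∀ g x y, B (ρ g x) (ρ g y) = B x y

theorem isInvariantForm_iff_isIntertwiningMap (B : LinearMap.BilinForm k V) :
    ρ.IsInvariantForm B ↔ ρ.IsIntertwiningMap ρ.dual B := by
  rw [isIntertwiningMap_iff]
  refine ⟨fun hB g x => LinearMap.ext fun y => ?_, fun hB g x y => ?_⟩
  · simpa [dual_apply, Dual.transpose_apply] using hB g x (ρ g⁻¹ y)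
  · simp [hB, dual_apply, Dual.transpose_apply]

theorem Equiv.isInvariantForm (e : ρ.Equiv ρ.dual) : ρ.IsInvariantForm e.toLinearMap :=
  (isInvariantForm_iff_isIntertwiningMap _).2 ⟨e.toIntertwiningMap.isIntertwining⟩

theorem IsInvariantForm.separatingLeft_restrict_invariants [Fintype G]
    [Invertible (Fintype.card G : k)] {B : LinearMap.BilinForm k V} (hinv : ρ.IsInvariantForm B)
    (hB : B.SeparatingLeft) : (B.restrict ρ.invariants).SeparatingLeft := by
  rintro ⟨u, hu⟩ hu0
  refine Subtype.ext (hB u fun w => ?_)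
  have huw : ∀ g, B u (ρ g w) = B u w := fun g => by rw [← hinv g u w, hu g]
  simpa [GroupAlgebra.average, map_sum, huw, Invertible.ne_zero] using
    hu0 ⟨ρ.averageMap w, ρ.averageMap_invariant w⟩

end Invariant

section Irreducible

variable {k G V : Type*} [Field k] [Group G] [AddCommGroup V] [Module k V]
  {ρ : Representation k G V} [IsAlgClosed k] [FiniteDimensional k V] [ρ.IsIrreducible]

theorem IsInvariantForm.exists_eq_smul (e : ρ.Equiv ρ.dual) {B : LinearMap.BilinForm k V}
    (hB : ρ.IsInvariantForm B) : ∃ t : k, B = t • e.toLinearMap := by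
  let f : IntertwiningMap ρ ρ := e.symm.toIntertwiningMap.comp
    (B.intertwiningMap_of_isIntertwiningMap ρ ρ.dual
      ((isInvariantForm_iff_isIntertwiningMap B).1 hB).isIntertwining)
  obtain ⟨t, ht⟩ := IsIrreducible.algebraMap_intertwiningMap_bijective_of_isAlgClosed.2 f
  refine ⟨t, LinearMap.ext fun x => ?_⟩
  simpa [f] using congr(e ($ht x)).symm

theorem Equiv.exists_apply_swap_eq_mul (e : ρ.Equiv ρ.dual) :
    ∃ c : k, ∀ x y, e y x = c * e x y := by
  obtain ⟨c, hc⟩ := IsInvariantForm.exists_eq_smul e (B := e.toLinearMap.flip)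
    fun g x y => e.isInvariantForm g y x
  exact ⟨c, fun x y => by simpa using congr($hc x y)⟩

open _root_.TensorProduct in
theorem Equiv.comm_eq_smul_of_mem_invariants (e : ρ.Equiv ρ.dual) {c : k}
    (hc : ∀ x y, e y x = c * e x y) {w : V ⊗[k] V} (hw : w ∈ (ρ.tprod ρ).invariants) :
    _root_.TensorProduct.comm k V V w = c • w := by
  -- `L` identifies `V ⊗ V` with the bilinear forms on `V`; it turns invariant tensors into
  -- invariant forms, hence multiples of `e`, and the swap into transposition.
  let L : V ⊗[k] V ≃ₗ[k] Dual k (V ⊗[k] V) :=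
    (congr e.toLinearEquiv e.toLinearEquiv).trans (dualDistribEquiv k V V)
  have hL : ∀ a b x y, L (a ⊗ₜ b) (x ⊗ₜ y) = e a x * e b y := fun _ _ _ _ => rfl
  have hL_map : ∀ g z x y, L (ρ.tprod ρ g z) (ρ g x ⊗ₜ ρ g y) = L z (x ⊗ₜ y) := by
    intro g z x y
    induction z using _root_.TensorProduct.induction_on with
    | zero => simp
    | tmul a b =>
      rw [tprod_apply, map_tmul, hL, hL]
      exact congr($(e.isInvariantForm g a x) * $(e.isInvariantForm g b y))
    | add z z' hz hz' => simp only [map_add, LinearMap.add_apply, hz, hz']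
  have hL_comm : ∀ z x y, L (_root_.TensorProduct.comm k V V z) (x ⊗ₜ y) = L z (y ⊗ₜ x) := by
    intro z x y
    induction z using _root_.TensorProduct.induction_on with
    | zero => simp
    | tmul a b => simp [hL, mul_comm]
    | add z z' hz hz' => simp [hz, hz']
  obtain ⟨t, ht⟩ := IsInvariantForm.exists_eq_smul e
    (B := (_root_.TensorProduct.mk k V V).compr₂ (L w)) fun g x y => by
      have h := hL_map g w x y
      rwa [hw g] at h
  have hLw : ∀ x y, L w (x ⊗ₜ y) = t * e x y := fun x y => congr($ht x y)
  apply L.injective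
  refine _root_.TensorProduct.ext' fun x y => ?_
  rw [hL_comm, map_smul, LinearMap.smul_apply, hLw, hLw, hc, smul_eq_mul, mul_left_comm]

theorem finrank_invariants_tprod_self [Fintype G] [CharZero k] (e : ρ.Equiv ρ.dual) :
    finrank k (ρ.tprod ρ).invariants = 1 := by
  -- Self-duality makes the character real, so `dim (V ⊗ V)^G = ⟨χ, χ⟩ = dim End_G V = 1`.
  have : Invertible (Nat.card G : k) := invertibleOfNonzero (by simp)
  have hχ : ∀ g, ρ.character g⁻¹ = ρ.character g := fun g => by
    rw [← char_dual, ← char_iso e]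
  have h₁ := card_inv_mul_sum_char_eq_finrank (ρ.tprod ρ)
  have h₂ := card_inv_mul_sum_char_mul_char_eq_finrank ρ ρ
  simp only [char_tensor, Pi.mul_apply, hχ, IsIrreducible.finrank_intertwiningMap_self] at h₁ h₂
  exact_mod_cast h₁.symm.trans h₂

end Irreducible

end Representation

section Complex

variable {G V : Type*} [Group G] [AddCommGroup V] [Module ℂ V]

theorem RepIsIrreducible.isIrreducible {ρ : Representation ℂ G V} (h : RepIsIrreducible ρ) :
    ρ.IsIrreducible := by
  have := h.1
  refine { exists_pair_ne := ⟨⊥, ⊤, fun h' => ?_⟩, eq_bot_or_eq_top := fun p => ?_ }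
  · exact bot_ne_top (congrArg Subrepresentation.toSubmodule h')
  · rcases h.2 p.toSubmodule (fun g x hx => p.apply_mem_toSubmodule g hx) with h | h
    · exact Or.inl (Subrepresentation.toSubmodule_injective h)
    · exact Or.inr (Subrepresentation.toSubmodule_injective h)

theorem RepIsSelfDual.nonempty_equiv {ρ : Representation ℂ G V} (h : RepIsSelfDual ρ) :
    Nonempty (ρ.Equiv ρ.dual) :=
  let ⟨e, he⟩ := h
  ⟨.mk e fun g => LinearMap.ext (he g)⟩

variable [Fintype G] [FiniteDimensional ℂ V] {ρ : Representation ℂ G V} [ρ.IsIrreducible]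

theorem fsIndicator_eq_of_apply_swap (e : ρ.Equiv ρ.dual) {c : ℂ}
    (hc : ∀ x y, e y x = c * e x y) : fsIndicator G ρ = c := by
  let _ : Invertible (Fintype.card G : ℂ) := invertibleOfNonzero (by simp)
  have hP := (ρ.tprod ρ).isProj_averageMap
  have hswap : TensorProduct.comm ℂ V V ∘ₗ (ρ.tprod ρ).averageMap =
      c • (ρ.tprod ρ).averageMap :=
    LinearMap.ext fun w => e.comm_eq_smul_of_mem_invariants hc (hP.map_mem w)
  calc fsIndicator G ρ
      = LinearMap.trace ℂ _ (TensorProduct.comm ℂ V V ∘ₗ (ρ.tprod ρ).averageMap) := by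
        simp only [Representation.averageMap, GroupAlgebra.average, map_smul, map_sum,
          Representation.asAlgebraHom_of, Representation.tprod_apply, ← Module.End.mul_eq_comp]
        simp [fsIndicator, Finset.mul_sum, Module.End.mul_eq_comp, LinearMap.trace_comm_comp_map]
    _ = c := by
        rw [hswap, map_smul, hP.trace, Representation.finrank_invariants_tprod_self e]
        simp

theorem Representation.Equiv.apply_swap_eq_fsIndicator_mul (e : ρ.Equiv ρ.dual) (x y : V) :
    e y x = fsIndicator G ρ * e x y := by
  obtain ⟨c, hc⟩ := e.exists_apply_swap_eq_mul
  rw [fsIndicator_eq_of_apply_swap e hc, hc]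

end Complex

section PiTensorForm

open PiTensorProduct

variable {ι k : Type*} [Fintype ι] [CommRing k] {V : ι → Type*} [∀ i, AddCommGroup (V i)]
  [∀ i, Module k (V i)] [∀ i, Module.Free k (V i)] [∀ i, Module.Finite k (V i)]

def piTensorForm (e : ∀ i, V i ≃ₗ[k] Dual k (V i)) :
    (⨂[k] i, V i) ≃ₗ[k] Dual k (⨂[k] i, V i) :=
  (PiTensorProduct.congr e).trans dualDistribEquiv

variable (e : ∀ i, V i ≃ₗ[k] Dual k (V i))

@[simp]
theorem piTensorForm_tprod_tprod (x y : ∀ i, V i) :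
    piTensorForm e (tprod k x) (tprod k y) = ∏ i, e i (x i) (y i) := by
  rw [piTensorForm, LinearEquiv.trans_apply, congr_tprod]
  exact dualDistrib_apply _ _

theorem piTensorForm_compl₁₂_map (f : ∀ i, V i →ₗ[k] V i)
    (hf : ∀ i x y, e i (f i x) (f i y) = e i x y) :
    (piTensorForm e).toLinearMap.compl₁₂ (map f) (map f) = piTensorForm e := by
  ext x y
  simp [hf]

theorem flip_piTensorForm {c : ι → k} (hc : ∀ i x y, e i y x = c i * e i x y) :
    (piTensorForm e).toLinearMap.flip = (∏ i, c i) • (piTensorForm e).toLinearMap := by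
  ext x y
  simp only [LinearMap.compMultilinearMap_apply, LinearMap.flip_apply, LinearMap.smul_apply,
    LinearEquiv.coe_coe, piTensorForm_tprod_tprod, smul_eq_mul]
  rw [Finset.prod_congr rfl fun i _ => hc i (x i) (y i), Finset.prod_mul_distrib]

end PiTensorForm

/-- If `V₁, …, V_ℓ` are irreducible self-dual finite-dimensional complex representations of a
finite group `G` and the product of their Frobenius–Schur indicators is `-1`, then the space of
`G`-invariants in `V₁ ⊗ V₂ ⊗ ⋯ ⊗ V_ℓ` is even-dimensional. -/
theorem even_finrank_invariants_of_prod_fsIndicator_eq_neg_one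
    {ℓ : ℕ} {G : Type*} [Group G] [Fintype G]
    (V : Fin ℓ → Type*) [∀ i, AddCommGroup (V i)] [∀ i, Module ℂ (V i)]
    [∀ i, FiniteDimensional ℂ (V i)]
    (ρ : ∀ i, Representation ℂ G (V i))
    (hirr : ∀ i, RepIsIrreducible (ρ i))
    (hsd : ∀ i, RepIsSelfDual (ρ i))
    (hν : ∏ i, fsIndicator G (ρ i) = -1) :
    Even (Module.finrank ℂ (piTensorRep ρ).invariants) := by
  have := fun i => (hirr i).isIrreducible
  let e := fun i => (hsd i).nonempty_equiv.some
  let B := piTensorForm fun i => (e i).toLinearEquiv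
  have hinv : (piTensorRep ρ).IsInvariantForm B := fun g z w => by
    have h := piTensorForm_compl₁₂_map (fun i => (e i).toLinearEquiv) (fun i => ρ i g)
      fun i => (e i).isInvariantForm g
    exact congr($h z w)
  have hskew : B.toLinearMap.flip = -B := by
    rw [flip_piTensorForm _ fun i => (e i).apply_swap_eq_fsIndicator_mul, hν]
    ext; simp [B]
  let _ : Invertible (Fintype.card G : ℂ) := invertibleOfNonzero (by simp)
  refine even_finrank_of_separatingLeft_of_flip_eq_neg (by simp [ringChar.eq_zero])
    (hinv.separatingLeft_restrict_invariants fun z hz => ?_) ?_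
  · exact B.map_eq_zero_iff.1 (LinearMap.ext hz)
  · ext u w
    exact congr($hskew u w)

end
end

section
/- Let G be a finite group and let χ₁, …, χ_ℓ be characters of irreducible finite-dimensional complex representations of G, each of which is self-dual, with Frobenius–Schur indicators ν_i := |G|⁻¹ ∑_{g∈G} χ_i(g²). If ∏_{i=1}^ℓ ν_i = −1, then the number |G|⁻¹ ∑_{g∈G} ∏_{i=1}^ℓ χ_i(g), which equals the dimension of the space of G-invariants in the tensor product of the corresponding representations, is an even (nonnegative) integer. -/
/-!
Each self-dual irreducible `V_i` carries a nondegenerate `G`-invariant bilinear form `S_i`; by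
Schur's lemma `S_iᵀ = c_i S_i`, and computing `χ_i(g²)` through `S_i` identifies `c_i` with the
Frobenius–Schur indicator `ν_i`. The Kronecker product of the `S_i` is then an invariant
nondegenerate form on `⊗ V_i` with `Sᵀ = (∏ ν_i) S = -S`. The averaging projection `P` onto the
invariants is self-adjoint for `S`, so `S` stays nondegenerate and alternating on the range of `P`,
whose dimension `trace P = |G|⁻¹ ∑_g ∏ χ_i(g)` is therefore even.
-/

open Matrix CategoryTheory

universe u

namespace Matrix

section PiKronecker

variable {ι R : Type*} [Fintype ι] [CommSemiring R] {m n p : ι → Type*}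

def piKronecker (A : ∀ i, Matrix (m i) (n i) R) : Matrix (∀ i, m i) (∀ i, n i) R :=
  of fun x y => ∏ i, A i (x i) (y i)

theorem piKronecker_apply (A : ∀ i, Matrix (m i) (n i) R) (x : ∀ i, m i) (y : ∀ i, n i) :
    piKronecker A x y = ∏ i, A i (x i) (y i) :=
  rfl

theorem piKronecker_transpose (A : ∀ i, Matrix (m i) (n i) R) :
    (piKronecker A)ᵀ = piKronecker fun i => (A i)ᵀ :=
  rfl

theorem piKronecker_smul (c : ι → R) (A : ∀ i, Matrix (m i) (n i) R) :
    piKronecker (fun i => c i • A i) = (∏ i, c i) • piKronecker A := by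
  ext x y
  simp only [piKronecker_apply, smul_apply, smul_eq_mul, Finset.prod_mul_distrib]

theorem piKronecker_mul [DecidableEq ι] [∀ i, Fintype (n i)]
    (A : ∀ i, Matrix (m i) (n i) R) (B : ∀ i, Matrix (n i) (p i) R) :
    piKronecker A * piKronecker B = piKronecker fun i => A i * B i := by
  ext x y
  simp only [mul_apply, piKronecker_apply, ← Finset.prod_mul_distrib]
  exact (Fintype.prod_sum fun i j => A i (x i) j * B i j (y i)).symm

theorem piKronecker_one [∀ i, DecidableEq (n i)] :
    piKronecker (fun i => (1 : Matrix (n i) (n i) R)) = 1 := by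
  ext x y
  rw [piKronecker_apply]
  by_cases h : x = y
  · subst h
    simp
  · obtain ⟨i, hi⟩ := Function.ne_iff.mp h
    rw [one_apply_ne h]
    exact Finset.prod_eq_zero (Finset.mem_univ i) (one_apply_ne hi)

theorem trace_piKronecker [DecidableEq ι] [∀ i, Fintype (n i)] (A : ∀ i, Matrix (n i) (n i) R) :
    trace (piKronecker A) = ∏ i, trace (A i) :=
  (Fintype.prod_sum fun i j => A i j j).symm

def piKroneckerHom [DecidableEq ι] [∀ i, Fintype (n i)] [∀ i, DecidableEq (n i)] :
    (∀ i, Matrix (n i) (n i) R) →* Matrix (∀ i, n i) (∀ i, n i) R where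
  toFun := piKronecker
  map_one' := piKronecker_one
  map_mul' A B := (piKronecker_mul A B).symm

end PiKronecker

theorem even_card_of_isUnit_of_transpose_eq_neg {R n : Type*} [CommRing R] [NeZero (2 : R)]
    [Fintype n] [DecidableEq n] {A : Matrix n n R} (hA : IsUnit A) (hskew : Aᵀ = -A) :
    Even (Fintype.card n) := by
  have hdet : IsUnit A.det := (isUnit_iff_isUnit_det A).mp hA
  have hpow : (-1 : R) ^ Fintype.card n = 1 := by
    apply hdet.mul_left_injective
    change _ * A.det = 1 * A.det
    rw [one_mul, ← det_neg, ← hskew, det_transpose]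
  have hne : (-1 : R) ≠ 1 := fun h => NeZero.ne (2 : R) <| by
    rw [← one_add_one_eq_two]
    nth_rw 1 [← h]
    exact neg_add_cancel 1
  exact (neg_one_pow_eq_one_iff_even hne).mp hpow

theorem exists_mul_eq_and_mul_eq_one_of_isIdempotentElem {K n : Type*} [Field K] [Fintype n]
    [DecidableEq n] {P : Matrix n n K} (hP : IsIdempotentElem P) :
    ∃ (r : ℕ) (B : Matrix n (Fin r) K) (C : Matrix (Fin r) n K), B * C = P ∧ C * B = 1 := by
  have hproj : LinearMap.IsProj (LinearMap.range (toLin' P)) (toLin' P) :=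
    LinearMap.IsIdempotentElem.isProj_range _ (hP.map Matrix.toLinAlgEquiv')
  let e := (Module.finBasis K (LinearMap.range (toLin' P))).equivFun
  refine ⟨_, LinearMap.toMatrix' (Submodule.subtype _ ∘ₗ e.symm.toLinearMap),
    LinearMap.toMatrix' (e.toLinearMap ∘ₗ hproj.codRestrict), ?_, ?_⟩
  · conv_rhs => rw [← LinearMap.toMatrix'_toLin' P]
    rw [← LinearMap.toMatrix'_comp]
    congr 1
    exact LinearMap.ext fun x => by simp
  · rw [← LinearMap.toMatrix'_comp, ← LinearMap.toMatrix'_id]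
    congr 1
    exact LinearMap.ext fun x => by simp [hproj.codRestrict_apply_cod]

theorem exists_even_eq_trace_of_isIdempotentElem {K n : Type*} [Field K] [NeZero (2 : K)]
    [Fintype n] [DecidableEq n] {P S : Matrix n n K} (hP : IsIdempotentElem P) (hS : IsUnit S)
    (hskew : Sᵀ = -S) (hPS : Pᵀ * S = S * P) :
    ∃ m : ℕ, Even m ∧ trace P = m := by
  obtain ⟨r, B, C, hBC, hCB⟩ := exists_mul_eq_and_mul_eq_one_of_isIdempotentElem hP
  -- the restriction of the skew form `S` to the range of `P`
  set A := Bᵀ * S * B with hA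
  have hAskew : Aᵀ = -A := by
    rw [hA, transpose_mul, transpose_mul, hskew, transpose_transpose, Matrix.neg_mul,
      Matrix.mul_neg, Matrix.mul_assoc]
  have hCA : Cᵀ * A = S * B :=
    calc Cᵀ * A = (B * C)ᵀ * S * B := by simp only [hA, transpose_mul, Matrix.mul_assoc]
      _ = S * B * (C * B) := by
          rw [hBC, hPS, ← hBC]
          simp only [Matrix.mul_assoc]
      _ = S * B := by rw [hCB, Matrix.mul_one]
  have hAunit : IsUnit A := by
    refine (isUnit_iff_isUnit_det A).mpr (isUnit_det_of_left_inverse (B := C * S⁻¹ * Cᵀ) ?_)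
    rw [Matrix.mul_assoc, hCA, Matrix.mul_assoc, ← Matrix.mul_assoc S⁻¹,
      nonsing_inv_mul S ((isUnit_iff_isUnit_det S).mp hS), Matrix.one_mul, hCB]
  refine ⟨r, by simpa using even_card_of_isUnit_of_transpose_eq_neg hAunit hAskew, ?_⟩
  rw [← hBC, trace_mul_comm, hCB, trace_one, Fintype.card_fin]

end Matrix

section InvariantForm

variable {G R n : Type*} [Group G] [CommRing R] [Fintype n] [DecidableEq n]
  {ρ : G →* Matrix n n R}

theorem transpose_mul_eq_mul_inv {S : Matrix n n R}
    (hS : ∀ g, (ρ g)ᵀ * S * ρ g = S) (g : G) : (ρ g)ᵀ * S = S * ρ g⁻¹ := by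
  conv_rhs => rw [← hS g]
  rw [mul_assoc, ← map_mul, mul_inv_cancel, map_one, mul_one]

theorem commute_inv_mul_of_forall_transpose_mul_mul_eq {S X : Matrix n n R} (hS : IsUnit S)
    (hSinv : ∀ g, (ρ g)ᵀ * S * ρ g = S) (hXinv : ∀ g, (ρ g)ᵀ * X * ρ g = X) (g : G) :
    Commute (S⁻¹ * X) (ρ g) := by
  have hdet := (isUnit_iff_isUnit_det S).mp hS
  have hX : X * ρ g = (ρ g⁻¹)ᵀ * X := by rw [transpose_mul_eq_mul_inv hXinv, inv_inv]
  have hS' : S⁻¹ * (ρ g⁻¹)ᵀ = ρ g * S⁻¹ :=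
    calc S⁻¹ * (ρ g⁻¹)ᵀ = S⁻¹ * ((ρ g⁻¹)ᵀ * S) * S⁻¹ := by
          rw [mul_assoc, mul_assoc, mul_nonsing_inv S hdet, mul_one]
      _ = ρ g * S⁻¹ := by
          rw [transpose_mul_eq_mul_inv hSinv, inv_inv, nonsing_inv_mul_cancel_left S (ρ g) hdet]
  rw [Commute, SemiconjBy, mul_assoc, hX, ← mul_assoc, hS', mul_assoc]

end InvariantForm

section GroupAverage

variable {G K n : Type*} [Group G] [Fintype G] [Field K] [Fintype n] [DecidableEq n]

noncomputable def averageMatrix (ρ : G →* Matrix n n K) : Matrix n n K :=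
  (Fintype.card G : K)⁻¹ • ∑ g, ρ g

theorem averageMatrix_mul (ρ : G →* Matrix n n K) (h : G) :
    averageMatrix ρ * ρ h = averageMatrix ρ := by
  rw [averageMatrix, Matrix.smul_mul, Finset.sum_mul]
  congr 1
  exact Fintype.sum_equiv (Equiv.mulRight h) _ _ fun g => (map_mul ρ g h).symm

theorem isIdempotentElem_averageMatrix [CharZero K] (ρ : G →* Matrix n n K) :
    IsIdempotentElem (averageMatrix ρ) := by
  have hG : (Fintype.card G : K) ≠ 0 := Nat.cast_ne_zero.mpr Fintype.card_ne_zero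
  change averageMatrix ρ * averageMatrix ρ = averageMatrix ρ
  nth_rw 2 [averageMatrix]
  simp only [Matrix.mul_smul, Finset.mul_sum, averageMatrix_mul, Finset.sum_const, Finset.card_univ,
    ← Nat.cast_smul_eq_nsmul K, smul_smul, inv_mul_cancel₀ hG, one_smul]

theorem transpose_averageMatrix_mul {ρ : G →* Matrix n n K} {S : Matrix n n K}
    (hS : ∀ g, (ρ g)ᵀ * S * ρ g = S) : (averageMatrix ρ)ᵀ * S = S * averageMatrix ρ := by
  rw [averageMatrix, transpose_smul, transpose_sum, Matrix.smul_mul, Matrix.mul_smul,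
    Finset.sum_mul, Finset.mul_sum]
  congr 1
  exact Fintype.sum_equiv (Equiv.inv G) _ _ fun g => by
    rw [transpose_mul_eq_mul_inv hS, Equiv.inv_apply]

theorem exists_even_eq_card_inv_mul_sum_trace [CharZero K] (ρ : G →* Matrix n n K)
    {S : Matrix n n K} (hS : IsUnit S) (hskew : Sᵀ = -S) (hinv : ∀ g, (ρ g)ᵀ * S * ρ g = S) :
    ∃ m : ℕ, Even m ∧ (Fintype.card G : K)⁻¹ * ∑ g, trace (ρ g) = m := by
  rw [← trace_sum, ← smul_eq_mul, ← trace_smul]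
  exact exists_even_eq_trace_of_isIdempotentElem (isIdempotentElem_averageMatrix ρ) hS hskew
    (transpose_averageMatrix_mul hinv)

end GroupAverage

section Schur

variable {G K n : Type*} [Group G] [Fintype G] [Field K] [CharZero K] [Fintype n] [DecidableEq n]
  {ρ : G →* Matrix n n K}

theorem card_inv_smul_sum_inv_mul_mul_eq [Nonempty n]
    (hρ : ∀ C : Matrix n n K, (∀ g, Commute C (ρ g)) → ∃ c : K, C = c • 1) (C : Matrix n n K) :
    (Fintype.card G : K)⁻¹ • ∑ g, ρ g⁻¹ * C * ρ g = (trace C / Fintype.card n) • 1 := by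
  have hG : (Fintype.card G : K) ≠ 0 := Nat.cast_ne_zero.mpr Fintype.card_ne_zero
  have hn : (Fintype.card n : K) ≠ 0 := Nat.cast_ne_zero.mpr Fintype.card_ne_zero
  set T := (Fintype.card G : K)⁻¹ • ∑ g, ρ g⁻¹ * C * ρ g with hT
  have hcomm : ∀ h, Commute T (ρ h) := fun h => by
    rw [Commute, SemiconjBy, hT, Matrix.smul_mul, Matrix.mul_smul, Finset.sum_mul, Finset.mul_sum]
    congr 1
    refine Fintype.sum_equiv (Equiv.mulRight h) _ _ fun g => ?_
    rw [Equiv.coe_mulRight, _root_.mul_inv_rev, map_mul, map_mul]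
    simp only [← mul_assoc]
    rw [← map_mul ρ h, mul_inv_cancel, map_one, one_mul]
  have htrace : trace T = trace C := by
    have hconj : ∀ g, trace (ρ g⁻¹ * C * ρ g) = trace C := fun g => by
      rw [trace_mul_comm, ← mul_assoc, ← map_mul, mul_inv_cancel, map_one, one_mul]
    rw [hT, trace_smul, trace_sum, Finset.sum_congr rfl fun g _ => hconj g, Finset.sum_const,
      Finset.card_univ, nsmul_eq_mul, smul_eq_mul, ← mul_assoc, inv_mul_cancel₀ hG, one_mul]
  obtain ⟨c, hc⟩ := hρ T hcomm
  rw [hc, ← htrace, hc, trace_smul, trace_one, smul_eq_mul, mul_div_cancel_right₀ _ hn]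

theorem transpose_eq_smul_of_forall_transpose_mul_mul_eq
    (hρ : ∀ C : Matrix n n K, (∀ g, Commute C (ρ g)) → ∃ c : K, C = c • 1) {S : Matrix n n K}
    (hS : IsUnit S) (hinv : ∀ g, (ρ g)ᵀ * S * ρ g = S) :
    Sᵀ = ((Fintype.card G : K)⁻¹ * ∑ g, trace (ρ (g * g))) • S := by
  rcases isEmpty_or_nonempty n with hempty | hnonempty
  · exact Subsingleton.elim _ _
  have hdet := (isUnit_iff_isUnit_det S).mp hS
  have hn : (Fintype.card n : K) ≠ 0 := Nat.cast_ne_zero.mpr Fintype.card_ne_zero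
  have hSt : ∀ g, (ρ g)ᵀ * Sᵀ * ρ g = Sᵀ := fun g => by
    simpa only [transpose_mul, transpose_transpose, mul_assoc] using congrArg transpose (hinv g)
  obtain ⟨c, hc⟩ :=
    hρ _ (commute_inv_mul_of_forall_transpose_mul_mul_eq hS hinv hSt)
  -- `(ρ g)ᵀ = S ρ(g⁻¹) S⁻¹` turns this average into the Schur average of `S⁻¹ X`
  have hform : ∀ X, (Fintype.card G : K)⁻¹ • ∑ g, (ρ g)ᵀ * X * ρ g
      = (trace (S⁻¹ * X) / (Fintype.card n : K)) • S := fun X => by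
    have hconj : ∀ g, (ρ g)ᵀ * X * ρ g = S * (ρ g⁻¹ * (S⁻¹ * X) * ρ g) := fun g => by
      rw [← mul_nonsing_inv_cancel_right S ((ρ g)ᵀ) hdet, transpose_mul_eq_mul_inv hinv]
      simp only [mul_assoc]
    simp only [hconj, ← Finset.mul_sum, ← Matrix.mul_smul]
    rw [card_inv_smul_sum_inv_mul_mul_eq hρ, Matrix.mul_smul, Matrix.mul_one]
  have hentry : ∀ a b, (Fintype.card G : K)⁻¹ * ∑ g, ρ g a b * ρ g b a
      = S⁻¹ b a * S b a / Fintype.card n := fun a b => by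
    simpa [Matrix.sum_apply, mul_apply, single_apply, ite_and, trace_mul_single, Finset.mul_sum,
      div_mul_eq_mul_div] using
      congrFun (congrFun (hform (single a b 1)) b) a
  have hind : (Fintype.card G : K)⁻¹ * ∑ g, trace (ρ (g * g)) = c :=
    calc (Fintype.card G : K)⁻¹ * ∑ g, trace (ρ (g * g))
        = ∑ a, ∑ b, (Fintype.card G : K)⁻¹ * ∑ g, ρ g a b * ρ g b a := by
          simp only [map_mul, trace, diag, mul_apply, Finset.mul_sum]
          rw [Finset.sum_comm]
          exact Finset.sum_congr rfl fun _ _ => Finset.sum_comm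
      _ = trace (S⁻¹ * Sᵀ) / Fintype.card n := by
          simp only [hentry, trace, diag, mul_apply, transpose_apply, Finset.sum_div]
          exact Finset.sum_comm
      _ = c := by rw [hc, trace_smul, trace_one, smul_eq_mul, mul_div_cancel_right₀ _ hn]
  rw [hind, ← mul_nonsing_inv_cancel_left S (Sᵀ) hdet, hc, Matrix.mul_smul, Matrix.mul_one]

end Schur

theorem exists_even_eq_card_inv_mul_sum_prod_trace {G K ι : Type*} [Group G] [Fintype G] [Field K]
    [CharZero K] [Fintype ι] [DecidableEq ι] {n : ι → Type*} [∀ i, Fintype (n i)]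
    [∀ i, DecidableEq (n i)] (ρ : ∀ i, G →* Matrix (n i) (n i) K) {S : ∀ i, Matrix (n i) (n i) K}
    {ν : ι → K} (hS : ∀ i, IsUnit (S i)) (hinv : ∀ i g, (ρ i g)ᵀ * S i * ρ i g = S i)
    (hν : ∀ i, (S i)ᵀ = ν i • S i) (hprod : ∏ i, ν i = -1) :
    ∃ m : ℕ, Even m ∧ (Fintype.card G : K)⁻¹ * ∑ g, ∏ i, trace (ρ i g) = m := by
  let ρ' : G →* Matrix (∀ i, n i) (∀ i, n i) K := piKroneckerHom.comp (MonoidHom.pi ρ)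
  have hρ' g : ρ' g = piKronecker fun i => ρ i g := rfl
  have hunit : IsUnit (piKronecker S) := (Pi.isUnit_iff.mpr hS).map piKroneckerHom
  have hskew : (piKronecker S)ᵀ = -piKronecker S := by
    simp only [piKronecker_transpose, hν, piKronecker_smul, hprod, neg_one_smul]
  have hprodinv g : (ρ' g)ᵀ * piKronecker S * ρ' g = piKronecker S := by
    simp only [hρ', piKronecker_transpose, piKronecker_mul, hinv]
  simpa only [hρ', trace_piKronecker] using
    exists_even_eq_card_inv_mul_sum_trace ρ' hunit hskew hprodinv

namespace FDRep

variable {k G : Type u} [Field k] [Group G] {n : Type*} [Fintype n] [DecidableEq n]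

noncomputable def matrixRep (V : FDRep k G) (b : Module.Basis n k V) : G →* Matrix n n k :=
  (LinearMap.toMatrixAlgEquiv b).toMonoidHom.comp V.ρ

theorem matrixRep_apply (V : FDRep k G) (b : Module.Basis n k V) (g : G) :
    V.matrixRep b g = LinearMap.toMatrix b b (V.ρ g) :=
  rfl

theorem trace_matrixRep (V : FDRep k G) (b : Module.Basis n k V) (g : G) :
    trace (V.matrixRep b g) = V.character g :=
  (LinearMap.trace_eq_matrix_trace k b (V.ρ g)).symm

theorem exists_eq_smul_one_of_forall_commute_matrixRep [IsAlgClosed k] (V : FDRep k G) [Simple V]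
    (b : Module.Basis n k V) (C : Matrix n n k) (hC : ∀ g, Commute C (V.matrixRep b g)) :
    ∃ c : k, C = c • 1 := by
  have hcomm : ∀ g, Matrix.toLin b b C ∘ₗ V.ρ g = V.ρ g ∘ₗ Matrix.toLin b b C := fun g => by
    apply (LinearMap.toMatrix b b).injective
    rw [LinearMap.toMatrix_comp b b b, LinearMap.toMatrix_comp b b b, LinearMap.toMatrix_toLin]
    exact hC g
  obtain ⟨c, hc⟩ := endomorphism_simple_eq_smul_id (𝕜 := k) (X := V)
    (⟨ObjectProperty.homMk (ModuleCat.ofHom (Matrix.toLin b b C)),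
      fun g => FGModuleCat.hom_ext (hcomm g)⟩ : V ⟶ V)
  refine ⟨c, ?_⟩
  have hlin : c • LinearMap.id = Matrix.toLin b b C := congrArg (fun φ : V ⟶ V => φ.hom.hom.hom) hc
  rw [← LinearMap.toMatrix_toLin b b C, ← hlin, _root_.map_smul, LinearMap.toMatrix_id]

theorem exists_isUnit_forall_transpose_mul_matrixRep_mul_eq (V : FDRep k G) (b : Module.Basis n k V)
    (e : V ≅ FDRep.of (Representation.dual V.ρ)) :
    ∃ S : Matrix n n k, IsUnit S ∧ ∀ g, (V.matrixRep b g)ᵀ * S * V.matrixRep b g = S := by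
  let f : V →ₗ[k] Module.Dual k V := e.hom.hom.hom.hom
  have hf : ∀ g, f ∘ₗ V.ρ g = Module.Dual.transpose (R := k) (V.ρ g⁻¹) ∘ₗ f := fun g =>
    congrArg (fun φ => φ.hom.hom) (e.hom.comm g)
  have hinv : e.inv.hom.hom.hom ∘ₗ f = LinearMap.id :=
    congrArg (fun φ => φ.hom.hom.hom) e.hom_inv_id
  refine ⟨LinearMap.toMatrix b b.dualBasis f, ?_, fun g => ?_⟩
  · refine (isUnit_iff_isUnit_det _).mpr (isUnit_det_of_left_inverse
      (B := LinearMap.toMatrix b.dualBasis b e.inv.hom.hom.hom) ?_)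
    rw [← LinearMap.toMatrix_comp, hinv, LinearMap.toMatrix_id]
  · have hmat := congrArg (LinearMap.toMatrix b b.dualBasis) (hf g)
    rw [LinearMap.toMatrix_comp b b b.dualBasis, LinearMap.toMatrix_comp b b.dualBasis b.dualBasis,
      LinearMap.toMatrix_transpose] at hmat
    rw [← matrixRep_apply, ← matrixRep_apply] at hmat
    rw [mul_assoc, hmat, ← mul_assoc, ← transpose_mul, ← map_mul, inv_mul_cancel, map_one,
      transpose_one, one_mul]

end FDRep

/-- If `χ₁, …, χ_ℓ` are characters of irreducible self-dual finite-dimensional complex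
representations of a finite group `G` and the product of their Frobenius–Schur indicators
`ν_i = |G|⁻¹ ∑_g χ_i(g²)` equals `-1`, then `|G|⁻¹ ∑_g ∏_i χ_i(g)` is an even nonnegative
integer. -/
theorem even_of_prod_fsIndicator_eq_neg_one
    {ℓ : ℕ} {G : Type} [Group G] [Fintype G]
    (χ : Fin ℓ → G → ℂ)
    (h : ∀ i, ∃ V : FDRep ℂ G,
      CategoryTheory.Simple V ∧ Nonempty (V ≅ FDRep.of (Representation.dual V.ρ)) ∧ χ i = V.character)
    (hν : ∏ i, ((Fintype.card G : ℂ)⁻¹ * ∑ g : G, χ i (g * g)) = -1) :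
    ∃ n : ℕ, Even n ∧ (Fintype.card G : ℂ)⁻¹ * ∑ g : G, ∏ i, χ i g = n := by
  choose V hV e hχ using h
  let b i := Module.finBasis ℂ (V i)
  choose S hS hinv using fun i =>
    (V i).exists_isUnit_forall_transpose_mul_matrixRep_mul_eq (b i) (e i).some
  have hschur i : ∀ C, (∀ g, Commute C ((V i).matrixRep (b i) g)) → ∃ c : ℂ, C = c • 1 :=
    haveI := hV i
    (V i).exists_eq_smul_one_of_forall_commute_matrixRep (b i)
  have hSt i : (S i)ᵀ = ((Fintype.card G : ℂ)⁻¹ * ∑ g, χ i (g * g)) • S i := by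
    simpa only [hχ, FDRep.trace_matrixRep] using
      transpose_eq_smul_of_forall_transpose_mul_mul_eq (hschur i) (hS i) (hinv i)
  simpa only [hχ, FDRep.trace_matrixRep] using
    exists_even_eq_card_inv_mul_sum_prod_trace (fun i => (V i).matrixRep (b i)) hS hinv hSt hν
end

section
/- Let G be a finite group and let V₁, …, V_ℓ be irreducible finite-dimensional complex representations of G, each of which is self-dual, with Frobenius–Schur indicators ν_i := |G|⁻¹ ∑_{g∈G} χ_{V_i}(g²) ∈ {+1, −1}. Then the space of G-invariants H := (V₁ ⊗ V₂ ⊗ ⋯ ⊗ V_ℓ)^G carries a non-degenerate bilinear form which is symmetric if ∏_{i=1}^ℓ ν_i = +1 and antisymmetric (alternating) if ∏_{i=1}^ℓ ν_i = −1. -/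
open scoped TensorProduct

noncomputable section

/-!
Self-duality equips each `V i` with an isomorphism `e i : V i ≃ V i*` that is a `G`-invariant
bilinear form, and Schur's lemma gives `e i (w, v) = c i * e i (v, w)` for a scalar `c i`.
Schur's lemma also shows that `∑ g, ρ g ⊗ ρ g⁻¹` acts on `V ⊗ V` as `|G| / dim V` times the swap;
combined with invariance and the flip relation this gives `∑ g, ρ (g * g) = (c |G| / dim V) • id`,
and taking traces identifies `c i` with the Frobenius–Schur indicator `ν i`. The product form
`∏ i, e i` on `V₁ ⊗ ⋯ ⊗ V_ℓ` is invariant and nondegenerate with flip `∏ i, ν i`, and averaging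
over `G` shows that its restriction to the invariants is still nondegenerate.
-/

section Irreducible

variable {G W : Type*} [Group G] [AddCommGroup W] [Module ℂ W] {ρ : Representation ℂ G W}

theorem RepIsIrreducible.isIrreducible_s2 (hρ : RepIsIrreducible ρ) : ρ.IsIrreducible where
  exists_pair_ne := by
    have := hρ.1
    refine ⟨⊥, ⊤, fun h => ?_⟩
    obtain ⟨x, hx⟩ := exists_ne (0 : W)
    exact hx (show x ∈ (⊥ : Subrepresentation ρ) from h ▸ trivial)
  eq_bot_or_eq_top σ := by
    rcases hρ.2 σ.toSubmodule fun g x hx => σ.apply_mem_toSubmodule g hx with h | h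
    · exact .inl (Subrepresentation.ext h)
    · exact .inr (Subrepresentation.ext h)

variable [FiniteDimensional ℂ W]

theorem RepIsIrreducible.exists_eq_smul_id (hρ : RepIsIrreducible ρ) {f : W →ₗ[ℂ] W}
    (hf : ρ.IsIntertwiningMap ρ f) : ∃ μ : ℂ, f = μ • LinearMap.id := by
  have := hρ.isIrreducible_s2
  obtain ⟨μ, hμ⟩ :=
    Representation.IsIrreducible.algebraMap_intertwiningMap_bijective_of_isAlgClosed.2
      (f.intertwiningMap_of_isIntertwiningMap ρ ρ hf.1)
  exact ⟨μ, congrArg Representation.IntertwiningMap.toLinearMap hμ.symm⟩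

variable [Fintype G]

theorem RepIsIrreducible.sum_conj_eq (hρ : RepIsIrreducible ρ) (T : W →ₗ[ℂ] W) :
    ∑ g, ρ g ∘ₗ T ∘ₗ ρ g⁻¹ =
      (Fintype.card G * LinearMap.trace ℂ W T / Module.finrank ℂ W) • LinearMap.id := by
  have : Nontrivial W := hρ.1
  have hnorm : (ρ.linHom ρ).norm T = ∑ g, ρ g ∘ₗ T ∘ₗ ρ g⁻¹ := by
    simp [Representation.norm, Representation.linHom_apply]
  obtain ⟨μ, hμ⟩ := hρ.exists_eq_smul_id <|
    (Representation.mem_linHom_invariants_iff_isIntertwining (∑ g, ρ g ∘ₗ T ∘ₗ ρ g⁻¹)).1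
      fun h => hnorm ▸ (ρ.linHom ρ).self_norm_apply h T
  have htrace : LinearMap.trace ℂ W (∑ g, ρ g ∘ₗ T ∘ₗ ρ g⁻¹) =
      Fintype.card G * LinearMap.trace ℂ W T := by
    have hconj g : LinearMap.trace ℂ W (ρ g ∘ₗ T ∘ₗ ρ g⁻¹) = LinearMap.trace ℂ W T := by
      rw [LinearMap.trace_comp_comm', LinearMap.comp_assoc, ← Module.End.mul_eq_comp (ρ g⁻¹),
        ← map_mul, inv_mul_cancel, map_one, Module.End.one_eq_id, LinearMap.comp_id]
    simp [hconj]
  rw [hμ, map_smul, LinearMap.trace_id, smul_eq_mul] at htrace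
  rw [hμ, ← htrace, mul_div_cancel_right₀ _ (Nat.cast_ne_zero.2 Module.finrank_pos.ne')]

theorem RepIsIrreducible.sum_smul_apply_inv (hρ : RepIsIrreducible ρ) (φ : Module.Dual ℂ W)
    (x z : W) :
    ∑ g, φ (ρ g⁻¹ z) • ρ g x = (Fintype.card G * φ x / Module.finrank ℂ W) • z := by
  simpa [LinearMap.trace_smulRight] using
    LinearMap.congr_fun (hρ.sum_conj_eq (φ.smulRight x)) z

theorem RepIsIrreducible.sum_apply_apply_inv (hρ : RepIsIrreducible ρ) (B : W →ₗ[ℂ] W →ₗ[ℂ] ℂ)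
    (x z : W) :
    ∑ g, B (ρ g x) (ρ g⁻¹ z) = Fintype.card G / Module.finrank ℂ W * B z x := by
  let b := Module.finBasis ℂ W
  have expand : ∀ y w, B y w = ∑ i, b.coord i w * B y (b i) := fun y w => by
    conv_lhs => rw [← b.sum_repr w, map_sum]
    simp [mul_comm]
  calc ∑ g, B (ρ g x) (ρ g⁻¹ z)
      = ∑ g, ∑ i, b.coord i (ρ g⁻¹ z) * B (ρ g x) (b i) :=
        Finset.sum_congr rfl fun g _ => expand _ _
    _ = ∑ i, B (∑ g, b.coord i (ρ g⁻¹ z) • ρ g x) (b i) := by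
        rw [Finset.sum_comm]
        simp [map_sum]
    _ = ∑ i, B ((Fintype.card G * b.coord i x / Module.finrank ℂ W) • z) (b i) := by
        simp_rw [hρ.sum_smul_apply_inv]
    _ = Fintype.card G / Module.finrank ℂ W * B z x := by
        rw [expand z x, Finset.mul_sum]
        simp [mul_div_right_comm, mul_assoc]

end Irreducible

theorem Representation.isIntertwiningMap_dual_iff {k G V : Type*} [CommSemiring k] [Group G]
    [AddCommMonoid V] [Module k V] (ρ : Representation k G V) (B : V →ₗ[k] Module.Dual k V) :
    ρ.IsIntertwiningMap ρ.dual B ↔ ∀ g x y, B (ρ g x) (ρ g y) = B x y := by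
  refine ⟨fun hB g x y => ?_, fun hB => ⟨fun g x => LinearMap.ext fun y => ?_⟩⟩
  · rw [hB.isIntertwining, Representation.dual_apply, Module.Dual.transpose_apply,
      LinearMap.comp_apply, Representation.inv_self_apply]
  · rw [Representation.dual_apply, Module.Dual.transpose_apply, LinearMap.comp_apply,
      ← hB g x (ρ g⁻¹ y), Representation.self_inv_apply]

section SelfDual

variable {G W : Type*} [Group G] [AddCommGroup W] [Module ℂ W] [FiniteDimensional ℂ W]
  {ρ : Representation ℂ G W} (e : W ≃ₗ[ℂ] Module.Dual ℂ W)

theorem RepIsIrreducible.exists_flip_eq_smul (hρ : RepIsIrreducible ρ)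
    (he : ρ.IsIntertwiningMap ρ.dual e) : ∃ c : ℂ, e.toLinearMap.flip = c • e.toLinearMap := by
  have hflip : ρ.IsIntertwiningMap ρ.dual e.toLinearMap.flip :=
    (ρ.isIntertwiningMap_dual_iff _).2 fun g x y =>
      ((ρ.isIntertwiningMap_dual_iff _).1 he g y x)
  obtain ⟨c, hc⟩ := hρ.exists_eq_smul_id (f := e.symm.toLinearMap ∘ₗ e.toLinearMap.flip)
    ⟨fun g x => e.injective <| by
      simp only [LinearMap.comp_apply, LinearEquiv.coe_coe, e.apply_symm_apply]
      rw [hflip.isIntertwining, ← LinearEquiv.coe_coe, he.isIntertwining, LinearEquiv.coe_coe,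
        e.apply_symm_apply]⟩
  refine ⟨c, LinearMap.ext fun x => ?_⟩
  simpa using congrArg e (LinearMap.congr_fun hc x)

variable [Fintype G]

theorem RepIsIrreducible.sum_mul_self_eq (hρ : RepIsIrreducible ρ)
    (he : ρ.IsIntertwiningMap ρ.dual e) {c : ℂ} (hc : e.toLinearMap.flip = c • e.toLinearMap) :
    ∑ g, ρ (g * g) = (Fintype.card G * c / Module.finrank ℂ W) • LinearMap.id := by
  have hinv : ∀ g x y, e (ρ g x) (ρ g y) = e x y := (ρ.isIntertwiningMap_dual_iff _).1 he
  have hschur : ∀ x y, ∑ g, e (ρ g x) (ρ g⁻¹ y) = Fintype.card G / Module.finrank ℂ W * e y x :=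
    hρ.sum_apply_apply_inv e
  ext x
  rw [← sub_eq_zero]
  refine (Module.forall_dual_apply_eq_zero_iff ℂ _).1 fun φ => ?_
  obtain ⟨y, rfl⟩ := e.surjective φ
  rw [map_sub, sub_eq_zero]
  calc e y ((∑ g, ρ (g * g)) x)
      = ∑ g, e (ρ g⁻¹ y) (ρ g x) := by
        simp only [LinearMap.sum_apply, map_sum, map_mul, Module.End.mul_apply]
        refine Finset.sum_congr rfl fun g _ => ?_
        rw [← hinv g (ρ g⁻¹ y), Representation.self_inv_apply]
    _ = c * ∑ g, e (ρ g x) (ρ g⁻¹ y) := by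
        rw [Finset.mul_sum]
        exact Finset.sum_congr rfl fun g _ => LinearMap.congr_fun (LinearMap.congr_fun hc _) _
    _ = e y ((Fintype.card G * c / Module.finrank ℂ W) • LinearMap.id x) := by
        rw [hschur]
        simp only [LinearMap.id_apply, map_smul, smul_eq_mul]
        ring

theorem RepIsIrreducible.flip_eq_fsIndicator_smul (hρ : RepIsIrreducible ρ)
    (he : ρ.IsIntertwiningMap ρ.dual e) :
    e.toLinearMap.flip = fsIndicator G ρ • e.toLinearMap := by
  have : Nontrivial W := hρ.1
  obtain ⟨c, hc⟩ := hρ.exists_flip_eq_smul e he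
  have htrace : ∑ g, LinearMap.trace ℂ W (ρ (g * g)) = Fintype.card G * c := by
    rw [← map_sum, hρ.sum_mul_self_eq e he hc, map_smul, LinearMap.trace_id, smul_eq_mul,
      div_mul_cancel₀ _ (Nat.cast_ne_zero.2 Module.finrank_pos.ne')]
  rwa [fsIndicator, htrace, inv_mul_cancel_left₀ (Nat.cast_ne_zero.2 Fintype.card_ne_zero)]

end SelfDual

theorem LinearMap.nondegenerate_of_bijective {R M : Type*} [CommRing R] [AddCommGroup M]
    [Module R M] [Module.Projective R M] {B : M →ₗ[R] Module.Dual R M}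
    (hB : Function.Bijective B) : B.Nondegenerate := by
  refine ⟨fun x hx => hB.1 ?_, fun y hy => (Module.forall_dual_apply_eq_zero_iff R y).1 fun φ => ?_⟩
  · rw [map_zero]
    exact LinearMap.ext hx
  · obtain ⟨x, rfl⟩ := hB.2 φ
    exact hy x

namespace PiTensorProduct

variable {ι R : Type*} [CommRing R] {M : ι → Type*} [∀ i, AddCommGroup (M i)]
  [∀ i, Module R (M i)]

theorem ext₂ {N : Type*} [AddCommGroup N] [Module R N]
    {B B' : (⨂[R] i, M i) →ₗ[R] (⨂[R] i, M i) →ₗ[R] N}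
    (h : ∀ v w, B (tprod R v) (tprod R w) = B' (tprod R v) (tprod R w)) : B = B' :=
  ext <| MultilinearMap.ext fun v => ext <| MultilinearMap.ext fun w => h v w

variable [Fintype ι] [∀ i, Module.Finite R (M i)] [∀ i, Module.Free R (M i)]

def congrDual (e : ∀ i, M i ≃ₗ[R] Module.Dual R (M i)) :
    (⨂[R] i, M i) ≃ₗ[R] Module.Dual R (⨂[R] i, M i) :=
  (congr e).trans dualDistribEquiv

variable (e : ∀ i, M i ≃ₗ[R] Module.Dual R (M i))

@[simp]
theorem congrDual_tprod_tprod (v w : ∀ i, M i) :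
    congrDual e (tprod R v) (tprod R w) = ∏ i, e i (v i) (w i) := by
  rw [congrDual, LinearEquiv.trans_apply, congr_tprod]
  exact dualDistrib_apply _ _

theorem flip_congrDual {c : ι → R} (hc : ∀ i, (e i).toLinearMap.flip = c i • (e i).toLinearMap) :
    (congrDual e).toLinearMap.flip = (∏ i, c i) • (congrDual e).toLinearMap := by
  have hc' i x y : e i y x = c i * e i x y := LinearMap.congr_fun (LinearMap.congr_fun (hc i) x) y
  refine ext₂ fun v w => ?_
  simp only [LinearMap.flip_apply, LinearMap.smul_apply, LinearEquiv.coe_coe,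
    congrDual_tprod_tprod, smul_eq_mul, ← Finset.prod_mul_distrib]
  exact Finset.prod_congr rfl fun i _ => hc' i _ _

theorem congrDual_map_map {f : ∀ i, M i →ₗ[R] M i}
    (hf : ∀ i x y, e i (f i x) (f i y) = e i x y) (x y : ⨂[R] i, M i) :
    congrDual e (map f x) (map f y) = congrDual e x y := by
  have := ext₂ (B := (congrDual e).toLinearMap.compl₁₂ (map f) (map f)) (B' := congrDual e)
    fun v w => by simp [hf]
  exact LinearMap.congr_fun (LinearMap.congr_fun this x) y

end PiTensorProduct

section Invariants

variable {k G V : Type*} [CommRing k] [Group G] [Fintype G] [Invertible (Fintype.card G : k)]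
  [AddCommGroup V] [Module k V] (ρ : Representation k G V) {B : V →ₗ[k] V →ₗ[k] k}

theorem Representation.separatingLeft_compl₁₂_invariants
    (hB : ∀ g x y, B (ρ g x) (ρ g y) = B x y) (hsep : B.SeparatingLeft) :
    (B.compl₁₂ ρ.invariants.subtype ρ.invariants.subtype).SeparatingLeft := by
  rintro ⟨v, hv⟩ h
  refine Subtype.ext (hsep v fun y => ?_)
  have hnorm : B v (ρ.norm y) = Fintype.card G * B v y := by
    rw [Representation.norm, LinearMap.sum_apply, map_sum]
    rw [Finset.sum_congr rfl fun g _ => show B v (ρ g y) = B v y by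
      conv_lhs => rw [← hv g]
      exact hB g v y]
    simp
  have := h ⟨ρ.norm y, (ρ.self_norm_apply · y)⟩
  rw [LinearMap.compl₁₂_apply, Submodule.subtype_apply, Submodule.subtype_apply, hnorm] at this
  exact (isUnit_of_invertible _).mul_right_eq_zero.1 this

theorem Representation.nondegenerate_compl₁₂_invariants
    (hB : ∀ g x y, B (ρ g x) (ρ g y) = B x y) (hnd : B.Nondegenerate) :
    (B.compl₁₂ ρ.invariants.subtype ρ.invariants.subtype).Nondegenerate :=
  ⟨ρ.separatingLeft_compl₁₂_invariants hB hnd.1, LinearMap.flip_separatingLeft.1 <|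
    ρ.separatingLeft_compl₁₂_invariants (B := B.flip) (fun g x y => hB g y x)
      (LinearMap.flip_separatingLeft.2 hnd.2)⟩

end Invariants

/-- If `V₁, …, V_ℓ` are irreducible self-dual finite-dimensional complex representations of a
finite group `G`, then the space of `G`-invariants `H` of `V₁ ⊗ ⋯ ⊗ V_ℓ` carries a
non-degenerate bilinear form which is symmetric if the product of the Frobenius–Schur
indicators is `+1` and antisymmetric if this product is `-1`. -/
theorem exists_nondegenerate_pairing_on_invariants
    {ℓ : ℕ} {G : Type*} [Group G] [Fintype G]
    (V : Fin ℓ → Type*) [∀ i, AddCommGroup (V i)] [∀ i, Module ℂ (V i)]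
    [∀ i, FiniteDimensional ℂ (V i)]
    (ρ : ∀ i, Representation ℂ G (V i))
    (hirr : ∀ i, RepIsIrreducible (ρ i))
    (hsd : ∀ i, RepIsSelfDual (ρ i)) :
    ∃ β : (piTensorRep ρ).invariants →ₗ[ℂ] (piTensorRep ρ).invariants →ₗ[ℂ] ℂ,
      (∀ v, (∀ w, β v w = 0) → v = 0) ∧
      (∀ w, (∀ v, β v w = 0) → w = 0) ∧
      ((∏ i, fsIndicator G (ρ i)) = 1 → ∀ v w, β w v = β v w) ∧
      ((∏ i, fsIndicator G (ρ i)) = -1 → ∀ v w, β w v = -β v w) := by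
  choose e he using hsd
  let B := (PiTensorProduct.congrDual e).toLinearMap
  have hB : ∀ g x y, B (piTensorRep ρ g x) (piTensorRep ρ g y) = B x y := fun g =>
    PiTensorProduct.congrDual_map_map e fun i => ((ρ i).isIntertwiningMap_dual_iff _).1 ⟨he i⟩ g
  have hflip : ∀ x y, B y x = (∏ i, fsIndicator G (ρ i)) * B x y := fun x y =>
    LinearMap.congr_fun (LinearMap.congr_fun (PiTensorProduct.flip_congrDual e
      fun i => (hirr i).flip_eq_fsIndicator_smul (e i) ⟨he i⟩) x) y
  have := invertibleOfNonzero (Nat.cast_ne_zero.2 Fintype.card_ne_zero : (Fintype.card G : ℂ) ≠ 0)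
  obtain ⟨hleft, hright⟩ := (piTensorRep ρ).nondegenerate_compl₁₂_invariants hB
    (LinearMap.nondegenerate_of_bijective (PiTensorProduct.congrDual e).bijective)
  refine ⟨B.compl₁₂ _ _, hleft, hright, fun h v w => ?_, fun h v w => ?_⟩ <;>
    simp [hflip v, h]
end
end

section
/- Let S be a type, let f : S → S be an involution (f ∘ f = id), let ℓ be a natural number, let x : Fin ℓ → S, and suppose there exists a permutation π of Fin ℓ such that x(π(i)) = f(x(i)) for all i. Then there exists a permutation σ of Fin ℓ of order at most two (σ ∘ σ = id) such that x(σ(i)) = f(x(i)) for all i. -/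
/-!
The permutation `π` maps the fibre `x⁻¹(s)` bijectively onto `x⁻¹(f s)`, so these fibres have the
same size. Numbering every fibre identifies the index set with `Σ s, Fin (#x⁻¹(s))`, and on that
set `⟨s, k⟩ ↦ ⟨f s, k⟩` is an involution lying over `f`.
-/

open Function Equiv

theorem card_fiber_eq_of_perm {α β : Type*} {x : α → β} {f : β → β} (hf : Injective f)
    (π : Perm α) (hπ : ∀ i, x (π i) = f (x i)) (s : β) :
    Nat.card {i // x i = f s} = Nat.card {i // x i = s} :=
  (Nat.card_congr <| π.subtypeEquiv fun i => by rw [hπ, hf.eq_iff]).symm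

section SigmaFin

variable {β : Type*} {n : β → ℕ}

def sigmaFinMap (f : β → β) (hn : ∀ s, n (f s) = n s) (p : Σ s, Fin (n s)) :
    Σ s, Fin (n s) :=
  ⟨f p.1, Fin.cast (hn p.1).symm p.2⟩

theorem sigmaFinMap_involutive {f : β → β} (hf : Involutive f) (hn : ∀ s, n (f s) = n s) :
    Involutive (sigmaFinMap f hn) := fun ⟨s, _⟩ =>
  Sigma.ext (hf s) <| (Fin.heq_ext_iff (congrArg n (hf s))).2 rfl

end SigmaFin

theorem exists_involutive_perm_of_card_fiber_eq {α β : Type*} [Finite α] (x : α → β)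
    {f : β → β} (hf : Involutive f)
    (hcard : ∀ s, Nat.card {a // x a = f s} = Nat.card {a // x a = s}) :
    ∃ σ : Perm α, Involutive σ ∧ ∀ a, x (σ a) = f (x a) := by
  let E : (Σ s, Fin (Nat.card {a // x a = s})) ≃ α :=
    (sigmaCongrRight fun s => (Finite.equivFin _).symm).trans (sigmaFiberEquiv x)
  have hE : ∀ p, x (E p) = p.1 := fun p => ((Finite.equivFin _).symm p.2).2
  have hτ := sigmaFinMap_involutive (n := fun s => Nat.card {a // x a = s}) hf hcard
  refine ⟨E.permCongr hτ.toPerm, fun a => by simp [permCongr_apply, hτ _], fun a => ?_⟩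
  calc x (E (sigmaFinMap f hcard (E.symm a))) = f (E.symm a).1 := hE _
    _ = f (x a) := by rw [← hE, E.apply_symm_apply]

/-- If `f : S → S` is an involution and `x : Fin ℓ → S` admits a permutation `π` with
`x (π i) = f (x i)` for all `i`, then it also admits such a permutation `σ` of order at most
two, i.e. with `σ ∘ σ = id`. -/
theorem exists_involutive_perm_of_perm {S : Type*} (f : S → S) (hf : f ∘ f = id)
    (ℓ : ℕ) (x : Fin ℓ → S)
    (h : ∃ π : Equiv.Perm (Fin ℓ), ∀ i, x (π i) = f (x i)) :
    ∃ σ : Equiv.Perm (Fin ℓ), (⇑σ ∘ ⇑σ = id) ∧ ∀ i, x (σ i) = f (x i) := by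
  have hf : Involutive f := congrFun hf
  obtain ⟨π, hπ⟩ := h
  obtain ⟨σ, hσ, hxσ⟩ := exists_involutive_perm_of_card_fiber_eq x hf
    (card_fiber_eq_of_perm hf.injective π hπ)
  exact ⟨σ, hσ.comp_self, hxσ⟩
end
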